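/- Let T be a densely defined operator that is C-selfadjoint, and let k ∈ ℕ be such that T^k is densely defined. If (T*)^k = (T^k)*, then T^k is C-selfadjoint. -/

import Mathlib

/-!
`T` is `C`-selfadjoint exactly when `T* = C T C`, domains included. Conjugating by `C`
commutes with composing partial maps, so then `(T*)^k = C T^k C`, and the hypothesis
`(T*)^k = (T^k)*` turns this into `(T^k)* = C T^k C`.
-/

open InnerProductSpace in
/-- A conjugation on a complex inner product space: an antilinear involution
satisfying `⟪Cf, Cg⟫ = ⟪g, f⟫`. -/
structure Conjugation (H : Type*) [NormedAddCommGroup H] [InnerProductSpace ℂ H] where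
  toFun : H → H
  map_add' : ∀ x y, toFun (x + y) = toFun x + toFun y
  map_smul' : ∀ (c : ℂ) (x : H), toFun (c • x) = (starRingEnd ℂ c) • toFun x
  invol : ∀ x, toFun (toFun x) = x
  inner_map : ∀ x y, (inner ℂ (toFun x) (toFun y) : ℂ) = inner ℂ y x

/-- `T` is `C`-symmetric: `T ⊆ C T* C`. -/
noncomputable def CSymmetric {H : Type*} [NormedAddCommGroup H] [InnerProductSpace ℂ H]
    [CompleteSpace H] (C : Conjugation H) (T : H →ₗ.[ℂ] H) : Prop :=
  ∀ x : T.domain, ∃ hx : C.toFun x ∈ T.adjoint.domain,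
    C.toFun (T.adjoint ⟨C.toFun x, hx⟩) = T x

/-- `T` is `C`-selfadjoint: `T = C T* C`. -/
noncomputable def CSelfAdjoint {H : Type*} [NormedAddCommGroup H] [InnerProductSpace ℂ H]
    [CompleteSpace H] (C : Conjugation H) (T : H →ₗ.[ℂ] H) : Prop :=
  CSymmetric C T ∧ ∀ y : H, C.toFun y ∈ T.adjoint.domain → y ∈ T.domain

/-- Composition of partially defined linear maps, with its natural (maximal) domain. -/
noncomputable def LinearPMap.pcomp {R E F G : Type*} [Ring R] [AddCommGroup E] [Module R E]
    [AddCommGroup F] [Module R F] [AddCommGroup G] [Module R G]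
    (g : F →ₗ.[R] G) (f : E →ₗ.[R] F) : E →ₗ.[R] G :=
  g.comp (f.domRestrict ((g.domain.comap f.toFun).map f.domain.subtype))
    (by
      intro x
      obtain ⟨⟨y, hy, hyx⟩, hx2⟩ := x.2
      have h := LinearPMap.domRestrict_apply (f := f) (x := x) (y := y) (by exact hyx.symm)
      exact h ▸ hy)

/-- Natural powers of a partially defined linear map, `T^(n+1) = T ∘ T^n`, with
`T^0` the identity on the whole space. -/
noncomputable def LinearPMap.ppow {R E : Type*} [Ring R] [AddCommGroup E] [Module R E]
    (T : E →ₗ.[R] E) : ℕ → E →ₗ.[R] E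
  | 0 => ⟨⊤, (⊤ : Submodule R E).subtype⟩
  | n + 1 => T.pcomp (T.ppow n)

namespace LinearPMap

variable {R E F : Type*} [Ring R] [AddCommGroup E] [Module R E] [AddCommGroup F] [Module R F]

lemma mem_pcomp_domain {G : Type*} [AddCommGroup G] [Module R G]
    {g : F →ₗ.[R] G} {f : E →ₗ.[R] F} {x : E} :
    x ∈ (g.pcomp f).domain ↔ ∃ h : x ∈ f.domain, f ⟨x, h⟩ ∈ g.domain := by
  constructor
  · rintro ⟨⟨y, hy, hyx⟩, hf⟩
    obtain rfl : y = ⟨x, hf⟩ := Subtype.ext hyx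
    exact ⟨hf, hy⟩
  · rintro ⟨h, hg⟩
    exact ⟨⟨⟨x, h⟩, hg, rfl⟩, h⟩

lemma pcomp_apply {G : Type*} [AddCommGroup G] [Module R G]
    (g : F →ₗ.[R] G) (f : E →ₗ.[R] F) (x : (g.pcomp f).domain)
    (h₁ : (x : E) ∈ f.domain) (h₂ : f ⟨x, h₁⟩ ∈ g.domain) :
    g.pcomp f x = g ⟨f ⟨x, h₁⟩, h₂⟩ :=
  congrArg g.toFun (Subtype.ext (f.domRestrict_apply rfl))

/-- `C ∘ S = U ∘ C` as partial maps, domains included; for an involution `C` this is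
`U = C S C`. -/
def Semiconj (C : E → F) (S : E →ₗ.[R] E) (U : F →ₗ.[R] F) : Prop :=
  ∀ x, (x ∈ S.domain ↔ C x ∈ U.domain) ∧
    ∀ (hx : x ∈ S.domain) (hx' : C x ∈ U.domain), U ⟨C x, hx'⟩ = C (S ⟨x, hx⟩)

namespace Semiconj

variable {C : E → F}

lemma pcomp {S₁ S₂ : E →ₗ.[R] E} {U₁ U₂ : F →ₗ.[R] F}
    (h₁ : Semiconj C S₁ U₁) (h₂ : Semiconj C S₂ U₂) :
    Semiconj C (S₁.pcomp S₂) (U₁.pcomp U₂) := by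
  intro x
  have hval : ∀ (hx : x ∈ S₂.domain) (hx' : C x ∈ U₂.domain),
      U₂ ⟨C x, hx'⟩ = C (S₂ ⟨x, hx⟩) := (h₂ x).2
  constructor
  · rw [mem_pcomp_domain, mem_pcomp_domain]
    constructor
    · rintro ⟨hx, hSx⟩
      have hx' := (h₂ x).1.mp hx
      exact ⟨hx', hval hx hx' ▸ (h₁ _).1.mp hSx⟩
    · rintro ⟨hx', hUx⟩
      have hx := (h₂ x).1.mpr hx'
      exact ⟨hx, (h₁ _).1.mpr (hval hx hx' ▸ hUx)⟩
  · intro hx hx'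
    obtain ⟨hx₂, hSx⟩ := mem_pcomp_domain.mp hx
    obtain ⟨hx₂', hUx⟩ := mem_pcomp_domain.mp hx'
    rw [pcomp_apply _ _ ⟨x, hx⟩ hx₂ hSx, pcomp_apply _ _ ⟨C x, hx'⟩ hx₂' hUx]
    have hUx' : C (S₂ ⟨x, hx₂⟩) ∈ U₁.domain := hval hx₂ hx₂' ▸ hUx
    have hsub : (⟨U₂ ⟨C x, hx₂'⟩, hUx⟩ : U₁.domain) = ⟨C (S₂ ⟨x, hx₂⟩), hUx'⟩ :=
      Subtype.ext (hval hx₂ hx₂')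
    rw [hsub]
    exact (h₁ _).2 hSx hUx'

lemma ppow {S : E →ₗ.[R] E} {U : F →ₗ.[R] F} (h : Semiconj C S U) :
    ∀ n, Semiconj C (S.ppow n) (U.ppow n)
  | 0 => fun _ => ⟨iff_of_true Submodule.mem_top Submodule.mem_top, fun _ _ => rfl⟩
  | n + 1 => h.pcomp (h.ppow n)

end Semiconj

end LinearPMap

lemma cSelfAdjoint_iff_semiconj_adjoint {H : Type*} [NormedAddCommGroup H]
    [InnerProductSpace ℂ H] [CompleteSpace H] (C : Conjugation H) (T : H →ₗ.[ℂ] H) :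
    CSelfAdjoint C T ↔ LinearPMap.Semiconj C.toFun T T.adjoint := by
  constructor
  · rintro ⟨hsymm, hmax⟩ x
    refine ⟨⟨fun hx => (hsymm ⟨x, hx⟩).1, hmax x⟩, fun hx hx' => ?_⟩
    obtain ⟨_, happ⟩ := hsymm ⟨x, hx⟩
    rw [← happ, C.invol]
  · intro h
    refine ⟨fun x => ⟨(h x).1.mp x.2, ?_⟩, fun y => (h y).1.mpr⟩
    rw [(h x).2 x.2, C.invol]

theorem stmt_2_general {H : Type*} [NormedAddCommGroup H] [InnerProductSpace ℂ H] [CompleteSpace H]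
    (C : Conjugation H) (T : H →ₗ.[ℂ] H)
    (hsa : CSelfAdjoint C T) (k : ℕ)
    (hadj : T.adjoint.ppow k = (T.ppow k).adjoint) :
    CSelfAdjoint C (T.ppow k) := by
  rw [cSelfAdjoint_iff_semiconj_adjoint, ← hadj]
  exact ((cSelfAdjoint_iff_semiconj_adjoint C T).mp hsa).ppow k

/-- If `T` is densely defined and `C`-selfadjoint, `T^k` is densely defined
and `(T*)^k = (T^k)*`, then `T^k` is `C`-selfadjoint. -/
theorem stmt_2 {H : Type*} [NormedAddCommGroup H] [InnerProductSpace ℂ H] [CompleteSpace H]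
    (C : Conjugation H) (T : H →ₗ.[ℂ] H)
    (hdense : Dense (T.domain : Set H)) (hsa : CSelfAdjoint C T)
    (k : ℕ) (hkdense : Dense ((T.ppow k).domain : Set H))
    (hadj : T.adjoint.ppow k = (T.ppow k).adjoint) :
    CSelfAdjoint C (T.ppow k) :=
  stmt_2_general C T hsa k hadj
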